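/- Let k be a field and G an abstract group. Then G is finite if and only if there exists a finite-dimensional regular evolution algebra X over k whose group of algebra automorphisms is isomorphic to G. -/

import Mathlib

/-- A finite-dimensional evolution algebra over a field `k`: a finite-dimensional
`k`-vector space equipped with a `k`-bilinear commutative multiplication admitting a
natural basis, i.e. a basis whose distinct elements multiply to zero. -/
structure EvolutionAlgebra (k : Type u) [Field k] : Type (u + 1) where
  carrier : Type u
  [isAddCommGroup : AddCommGroup carrier]
  [isModule : Module k carrier]
  mul : carrier →ₗ[k] carrier →ₗ[k] carrier
  mul_comm : ∀ x y : carrier, mul x y = mul y x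
  [isFiniteDimensional : FiniteDimensional k carrier]
  natural : ∃ (ι : Type u) (_ : Fintype ι) (b : Module.Basis ι k carrier),
      ∀ i j, i ≠ j → mul (b i) (b j) = 0

attribute [instance] EvolutionAlgebra.isAddCommGroup EvolutionAlgebra.isModule
  EvolutionAlgebra.isFiniteDimensional

/-- `X` is regular if `X² = X`, i.e. the span of all products is everything. -/
def EvolutionAlgebra.IsRegular {k : Type u} [Field k] (A : EvolutionAlgebra k) : Prop :=
  Submodule.span k {z : A.carrier | ∃ x y : A.carrier, z = A.mul x y} = ⊤

/-- Isomorphism of evolution algebras: a `k`-linear bijection commuting with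
the multiplications. -/
def EvolutionAlgebra.Iso {k : Type u} [Field k] (A B : EvolutionAlgebra k) : Prop :=
  ∃ e : A.carrier ≃ₗ[k] B.carrier, ∀ x y : A.carrier, e (A.mul x y) = B.mul (e x) (e y)

/-- The automorphism group of an evolution algebra: the subgroup of `k`-linear
bijections of the carrier commuting with the multiplication. -/
def EvolutionAlgebra.Aut {k : Type u} [Field k] (A : EvolutionAlgebra k) :
    Subgroup (A.carrier ≃ₗ[k] A.carrier) where
  carrier := {f | ∀ x y : A.carrier, f (A.mul x y) = A.mul (f x) (f y)}
  one_mem' := by intro x y; rfl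
  mul_mem' := by
    intro f g hf hg x y
    show f (g (A.mul x y)) = A.mul (f (g x)) (f (g y))
    rw [hg, hf]
  inv_mem' := by
    intro f hf x y
    apply f.injective
    show f (f.symm (A.mul x y)) = f (A.mul (f.symm x) (f.symm y))
    rw [hf]
    simp


/-!
If `X` is regular, the squares `b i * b i` of a natural basis are linearly independent, so an
automorphism sends each `b i` to `c i • b (σ i)` for a permutation `σ`. Comparing structure
constants gives `c j = d j * c (f j) ^ 2` with `f`, `d` depending only on `σ`; following the
`f`-orbit of `j` into a cycle shows that `c j` is a root of a nonzero polynomial, so there are only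
finitely many automorphisms.

Conversely, a finite group `H` is the automorphism group of a reflexive digraph with no other
cycles, obtained from the Cayley digraph of `H` by replacing colored edges with paths. The evolution
algebra whose structure matrix is the adjacency matrix of this digraph is regular, the matrix being
unitriangular, and its automorphisms are exactly the digraph automorphisms, the loops forcing
`c = 1`.
-/

universe u v

open Submodule

theorem exists_forall_eq_mul_pow_iterate {ι M : Type*} [CommMonoid M] (d : ι → M)
    (f : ι → ι) (m : ℕ) :
    ∃ D : ι → M, ∀ l : ι → M, (∀ j, l j = d j * l (f j) ^ 2) →
      ∀ j, l j = D j * l (f^[m] j) ^ 2 ^ m := by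
  induction m with
  | zero => exact ⟨1, fun l _ j => by simp⟩
  | succ m ih =>
    obtain ⟨D, hD⟩ := ih
    refine ⟨fun j => d j * D (f j) ^ 2, fun l hl j => ?_⟩
    rw [Function.iterate_succ_apply, hl j, hD l hl (f j), pow_succ 2 m, pow_mul, mul_pow,
      mul_assoc]

open Polynomial in
theorem finite_setOf_eq_mul_pow {R : Type*} [CommRing R] [IsDomain R] (a : R) {n : ℕ}
    (hn : n ≠ 1) : {x : R | x = a * x ^ n}.Finite := by
  have hP : C a * X ^ n - X ≠ 0 := fun h => by
    simpa [coeff_X_pow, hn.symm] using congrArg (coeff · 1) h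
  refine (finite_setOfPred_isRoot hP).subset fun x hx => ?_
  simp [← show x = a * x ^ n from hx]

theorem finite_setOf_forall_eq_mul_sq {ι R : Type*} [Finite ι] [CommRing R] [IsDomain R]
    (d : ι → R) (f : ι → ι) : {l : ι → R | ∀ j, l j = d j * l (f j) ^ 2}.Finite := by
  set S := {l : ι → R | ∀ j, l j = d j * l (f j) ^ 2}
  refine (Set.Finite.pi (t := fun j => (· j) '' S) fun j => ?_).subset
    fun l hl => Set.mem_univ_pi.mpr fun j => ⟨l, hl, rfl⟩
  obtain ⟨s, t, hst, hcycle⟩ : ∃ s t, s < t ∧ f^[s] j = f^[t] j := by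
    obtain ⟨s, t, hne, heq⟩ := Finite.exists_ne_map_eq_of_infinite fun n => f^[n] j
    rcases hne.lt_or_gt with h | h
    exacts [⟨s, t, h, heq⟩, ⟨t, s, h, heq.symm⟩]
  obtain ⟨D, hD⟩ := exists_forall_eq_mul_pow_iterate d f s
  obtain ⟨E, hE⟩ := exists_forall_eq_mul_pow_iterate d f (t - s)
  have hperiod : f^[t - s] (f^[s] j) = f^[s] j := by
    rw [← Function.iterate_add_apply, Nat.sub_add_cancel hst.le, hcycle]
  have hpow : 2 ^ (t - s) ≠ 1 := (Nat.one_lt_two_pow (Nat.sub_ne_zero_of_lt hst)).ne'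
  refine ((finite_setOf_eq_mul_pow (E (f^[s] j)) hpow).image fun x => D j * x ^ 2 ^ s).subset ?_
  · rintro _ ⟨l, hl, rfl⟩
    exact ⟨l (f^[s] j), by simpa [hperiod] using hE l hl (f^[s] j), (hD l hl j).symm⟩

section NaturalBasis

variable {k : Type*} [Field k] {X : Type*} [AddCommGroup X] [Module k X]
  {ι : Type*} {b : Module.Basis ι k X} {mul : X →ₗ[k] X →ₗ[k] X}

theorem mul_eq_sum_repr_mul_repr_smul [Fintype ι] (hb : ∀ i j, i ≠ j → mul (b i) (b j) = 0)
    (x y : X) :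
    mul x y = ∑ i, (b.repr x i * b.repr y i) • mul (b i) (b i) := by
  conv_lhs => rw [← b.sum_repr x, ← b.sum_repr y]
  simp only [map_sum, LinearMap.sum_apply, map_smul, LinearMap.smul_apply, Finset.smul_sum]
  refine Finset.sum_congr rfl fun i _ => ?_
  rw [Finset.sum_eq_single i (fun j _ hji => by simp [hb j i hji])
    (fun h => absurd (Finset.mem_univ i) h), smul_smul, mul_comm]

theorem span_range_mul_self_eq_top [Fintype ι] (hb : ∀ i j, i ≠ j → mul (b i) (b j) = 0)
    (hreg : span k {z | ∃ x y, z = mul x y} = ⊤) :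
    span k (Set.range fun i => mul (b i) (b i)) = ⊤ := by
  rw [eq_top_iff, ← hreg, span_le]
  rintro _ ⟨x, y, rfl⟩
  rw [mul_eq_sum_repr_mul_repr_smul hb x y]
  exact sum_mem fun i _ => smul_mem _ _ (subset_span ⟨i, rfl⟩)

theorem linearIndependent_mul_self [Fintype ι] [FiniteDimensional k X]
    (hb : ∀ i j, i ≠ j → mul (b i) (b j) = 0)
    (hreg : span k {z | ∃ x y, z = mul x y} = ⊤) :
    LinearIndependent k fun i => mul (b i) (b i) :=
  linearIndependent_of_top_le_span_of_card_eq_finrank (span_range_mul_self_eq_top hb hreg).ge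
    (Module.finrank_eq_card_basis b).symm

theorem exists_repr_mul_self_ne_zero [Fintype ι] (hb : ∀ i j, i ≠ j → mul (b i) (b j) = 0)
    (hreg : span k {z | ∃ x y, z = mul x y} = ⊤) (j : ι) :
    ∃ i, b.repr (mul (b i) (b i)) j ≠ 0 := by
  by_contra! h
  have hcoord : b.coord j = 0 := LinearMap.ext_on_range (span_range_mul_self_eq_top hb hreg) h
  simpa using LinearMap.congr_fun hcoord (b j)

theorem exists_perm_apply_eq_smul [Fintype ι] [FiniteDimensional k X]
    (hb : ∀ i j, i ≠ j → mul (b i) (b j) = 0)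
    (hreg : span k {z | ∃ x y, z = mul x y} = ⊤)
    {e : X ≃ₗ[k] X} (he : ∀ x y, e (mul x y) = mul (e x) (e y)) :
    ∃ (σ : Equiv.Perm ι) (c : ι → k), (∀ i, c i ≠ 0) ∧
      ∀ i, e (b i) = c i • b (σ i) := by
  classical
  set C : ι → ι → k := fun i j => b.repr (e (b i)) j
  -- `e (b i) * e (b i') = 0` forces the coordinate vectors of `e (b i)` and `e (b i')` to have
  -- disjoint supports, because the squares `b j * b j` are linearly independent.
  have hdisj : ∀ i i' j, i ≠ i' → C i j * C i' j = 0 := fun i i' j hii' => by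
    have h0 : ∑ j, (C i j * C i' j) • mul (b j) (b j) = 0 := by
      rw [← mul_eq_sum_repr_mul_repr_smul hb, ← he, hb i i' hii', map_zero]
    exact Fintype.linearIndependent_iff.mp (linearIndependent_mul_self hb hreg) _ h0 j
  have hsupp : ∀ i, ∃ j, C i j ≠ 0 := fun i => by
    by_contra! h
    exact b.ne_zero i (e.map_eq_zero_iff.mp (b.repr.map_eq_zero_iff.mp (Finsupp.ext h)))
  choose g hg using hsupp
  have hg_inj : g.Injective := fun i i' hgi => by
    by_contra hii'
    exact mul_ne_zero (hg i) (hgi ▸ hg i') (hdisj i i' (g i) hii')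
  let σ := Equiv.ofBijective g hg_inj.bijective_of_finite
  have hC : ∀ i j, j ≠ g i → C i j = 0 := fun i j hj => by
    obtain ⟨i', rfl⟩ := σ.surjective j
    have hii' : i ≠ i' := fun h => hj (h ▸ rfl)
    by_contra hne
    exact mul_ne_zero hne (hg i') (hdisj i i' _ hii')
  refine ⟨σ, fun i => C i (g i), hg, fun i => b.ext_elem fun j => ?_⟩
  by_cases hj : j = g i
  · subst hj; simp [σ, C]
  · simpa [σ, Ne.symm hj] using hC i j hj

theorem repr_mul_self_mul_eq {e : X ≃ₗ[k] X} (he : ∀ x y, e (mul x y) = mul (e x) (e y))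
    {σ : Equiv.Perm ι} {c : ι → k} (hc : ∀ i, e (b i) = c i • b (σ i)) (i j : ι) :
    b.repr (mul (b i) (b i)) j * c j = c i ^ 2 * b.repr (mul (b (σ i)) (b (σ i))) (σ j) := by
  classical
  have hrepr : ∀ x, b.repr (e x) (σ j) = b.repr x j * c j := fun x => by
    have : (b.coord (σ j)).comp (e : X →ₗ[k] X) = c j • b.coord j := b.ext fun l => by
      rcases eq_or_ne l j with rfl | hlj <;> simp [*]
    simpa [mul_comm] using LinearMap.congr_fun this x
  simp only [← hrepr, he, hc, map_smul, LinearMap.smul_apply, smul_smul, ← sq]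
  simp

theorem finite_setOf_map_mul [Fintype ι] [FiniteDimensional k X]
    (hb : ∀ i j, i ≠ j → mul (b i) (b j) = 0)
    (hreg : span k {z | ∃ x y, z = mul x y} = ⊤) :
    {e : X ≃ₗ[k] X | ∀ x y, e (mul x y) = mul (e x) (e y)}.Finite := by
  set a : ι → ι → k := fun i j => b.repr (mul (b i) (b i)) j
  choose f hf using exists_repr_mul_self_ne_zero hb hreg
  -- `d σ` comes from `repr_mul_self_mul_eq` at `(f j, j)`, where `a (f j) j ≠ 0`.
  let d : Equiv.Perm ι → ι → k := fun σ j => a (σ (f j)) (σ j) / a (f j) j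
  have hT : (⋃ σ : Equiv.Perm ι, (fun c i => c i • b (σ i)) ''
      {c : ι → k | ∀ j, c j = d σ j * c (f j) ^ 2}).Finite :=
    Set.finite_iUnion fun σ => (finite_setOf_forall_eq_mul_sq _ _).image _
  refine Set.Finite.of_finite_image (f := fun e i => e (b i)) (hT.subset ?_)
    fun e₁ _ e₂ _ h => LinearEquiv.toLinearMap_injective (b.ext (congrFun h))
  rintro _ ⟨e, he, rfl⟩
  obtain ⟨σ, c, -, hc⟩ := exists_perm_apply_eq_smul hb hreg he
  refine Set.mem_iUnion.mpr ⟨σ, c, fun j => ?_, funext fun i => (hc i).symm⟩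
  have hrel := repr_mul_self_mul_eq he hc (f j) j
  rw [div_mul_eq_mul_div, eq_div_iff (hf j)]
  linear_combination hrel

end NaturalBasis

theorem Pi.single_mul_single_of_ne {ι R : Type*} [DecidableEq ι] [MulZeroClass R] {i j : ι}
    (hij : i ≠ j) (x y : R) : (Pi.single i x : ι → R) * Pi.single j y = 0 := by
  rw [← Pi.single_mul_left, Pi.single_eq_of_ne hij, mul_zero, Pi.single_zero]

theorem Matrix.span_range_row_eq_top_of_triangular {k V : Type*} [Field k] [Fintype V]
    {M : Matrix V V k} (rank : V → ℕ) (hdiag : ∀ v, M v v ≠ 0)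
    (hrank : ∀ v w, w ≠ v → M v w ≠ 0 → rank w < rank v) :
    span k (Set.range M.row) = ⊤ := by
  classical
  suffices h : ∀ n v, rank v = n → Pi.single v 1 ∈ span k (Set.range M.row) by
    rw [eq_top_iff, ← (Pi.basisFun k V).span_eq, span_le]
    rintro _ ⟨v, rfl⟩
    exact Pi.basisFun_apply k V v ▸ h _ v rfl
  intro n
  induction n using Nat.strong_induction_on with
  | _ n ih =>
  rintro v rfl
  have hsingle : ∀ w, Pi.single w (M v w) = M v w • (Pi.single w 1 : V → k) := fun w => by
    rw [← Pi.single_smul', smul_eq_mul, mul_one]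
  have hrow :
      M v v • Pi.single v 1 = M.row v - ∑ w ∈ Finset.univ.erase v, Pi.single w (M v w) := by
    rw [eq_sub_iff_add_eq, ← hsingle,
      Finset.add_sum_erase _ (fun w => Pi.single w (M v w)) (Finset.mem_univ v)]
    exact Finset.univ_sum_single (M.row v)
  refine (smul_mem_iff _ (hdiag v)).mp (hrow ▸ sub_mem (subset_span ⟨v, rfl⟩) (sum_mem ?_))
  intro w hw
  by_cases hvw : M v w = 0
  · simp [hvw]
  · rw [hsingle]
    exact smul_mem _ _ (ih _ (hrank v w (Finset.ne_of_mem_erase hw) hvw) w rfl)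

section RelMatrix

variable (k : Type*) [Zero k] [One k] {V : Type*} (r : V → V → Prop)

open Classical in
noncomputable def relMatrix : Matrix V V k :=
  Matrix.of fun v w => if r v w then 1 else 0

variable {k r}

theorem relMatrix_of_rel {v w : V} (h : r v w) : relMatrix k r v w = 1 := by
  simp [relMatrix, h]

theorem relMatrix_ne_zero_iff [NeZero (1 : k)] {v w : V} : relMatrix k r v w ≠ 0 ↔ r v w := by
  by_cases h : r v w <;> simp [relMatrix, h]

theorem relMatrix_submatrix_relIso (σ : r ≃r r) :
    (relMatrix k r).submatrix σ σ = relMatrix k r := by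
  classical
  ext v w
  exact if_congr σ.map_rel_iff rfl rfl

end RelMatrix

namespace EvolutionAlgebra

variable {k : Type u} [Field k]

theorem finite_aut (A : EvolutionAlgebra k) (hA : A.IsRegular) : Finite A.Aut := by
  obtain ⟨ι, _, b, hb⟩ := A.natural
  exact (finite_setOf_map_mul hb hA).to_subtype

variable {V : Type u} [Fintype V]

abbrev ofMatrix (M : Matrix V V k) : EvolutionAlgebra k where
  carrier := V → k
  mul := (LinearMap.mul k (V → k)).compr₂ M.vecMulLinear
  mul_comm x y := congrArg (Matrix.vecMul · M) (_root_.mul_comm x y)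
  natural := ⟨V, inferInstance, Pi.basisFun k V, fun i j hij => by
    classical
    simp [Pi.single_mul_single_of_ne hij]⟩

open Matrix in
theorem ofMatrix_mul_apply (M : Matrix V V k) (x y : V → k) :
    (ofMatrix M).mul x y = (x * y) ᵥ* M :=
  rfl

theorem ofMatrix_mul_basisFun_of_ne (M : Matrix V V k) {v w : V} (hvw : v ≠ w) :
    (ofMatrix M).mul (Pi.basisFun k V v) (Pi.basisFun k V w) = 0 := by
  classical
  simp [Pi.single_mul_single_of_ne hvw]

theorem ofMatrix_mul_basisFun_self (M : Matrix V V k) (v : V) :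
    (ofMatrix M).mul (Pi.basisFun k V v) (Pi.basisFun k V v) = M.row v := by
  classical
  rw [ofMatrix_mul_apply, Pi.basisFun_apply, ← Pi.single_mul, mul_one, Matrix.single_one_vecMul]

theorem isRegular_ofMatrix {M : Matrix V V k} (hM : span k (Set.range M.row) = ⊤) :
    (ofMatrix M).IsRegular := by
  rw [IsRegular, eq_top_iff, ← hM, span_le]
  rintro _ ⟨v, rfl⟩
  exact subset_span ⟨_, _, (ofMatrix_mul_basisFun_self M v).symm⟩

theorem funCongrLeft_ofMatrix_mul {M : Matrix V V k} {σ : V ≃ V} (hM : M.submatrix σ σ = M)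
    (x y : V → k) :
    LinearEquiv.funCongrLeft k k σ.symm ((ofMatrix M).mul x y) =
      (ofMatrix M).mul (LinearEquiv.funCongrLeft k k σ.symm x)
        (LinearEquiv.funCongrLeft k k σ.symm y) := by
  show Matrix.vecMul (x * y) M ∘ σ.symm = Matrix.vecMul (x ∘ σ.symm * y ∘ σ.symm) M
  conv_lhs => rw [← hM, Matrix.submatrix_vecMul_equiv]
  ext u
  simp only [Function.comp_apply, Equiv.apply_symm_apply]
  rfl

variable (k) (r : V → V → Prop)

noncomputable def relIsoToAut : (r ≃r r) →* (ofMatrix (relMatrix k r)).Aut where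
  toFun σ := ⟨LinearEquiv.funCongrLeft k k σ.toEquiv.symm,
    funCongrLeft_ofMatrix_mul (relMatrix_submatrix_relIso σ)⟩
  map_one' := rfl
  map_mul' _ _ := rfl

variable {k r}

theorem relIsoToAut_apply_basisFun (σ : r ≃r r) (v : V) :
    (relIsoToAut k r σ : (V → k) ≃ₗ[k] _) (Pi.basisFun k V v) = Pi.basisFun k V (σ v) := by
  classical
  simp only [Pi.basisFun_apply]
  exact Pi.single_comp_equiv σ.toEquiv.symm v 1

theorem relIsoToAut_injective : Function.Injective (relIsoToAut k r) := fun σ τ h =>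
  RelIso.ext fun v => (Pi.basisFun k V).injective <| by
    rw [← relIsoToAut_apply_basisFun, ← relIsoToAut_apply_basisFun, h]

theorem relIsoToAut_surjective (hrefl : ∀ v, r v v)
    (hreg : (ofMatrix (relMatrix k r)).IsRegular) :
    Function.Surjective (relIsoToAut k r) := by
  rintro ⟨e, he⟩
  obtain ⟨σ, c, hc0, hc⟩ :=
    exists_perm_apply_eq_smul (fun _ _ => ofMatrix_mul_basisFun_of_ne _) hreg he
  have hrel : ∀ v w, relMatrix k r v w * c w = c v ^ 2 * relMatrix k r (σ v) (σ w) := by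
    intro v w
    have h := repr_mul_self_mul_eq he hc v w
    rwa [ofMatrix_mul_basisFun_self, ofMatrix_mul_basisFun_self, Pi.basisFun_repr,
      Pi.basisFun_repr] at h
  -- The loops give `c v = c v ^ 2`, hence `c v = 1`.
  have hc1 : ∀ v, c v = 1 := fun v => by
    have h := hrel v v
    rw [relMatrix_of_rel (hrefl v), relMatrix_of_rel (hrefl _), one_mul, mul_one, sq] at h
    exact (mul_eq_left₀ (hc0 v)).mp h.symm
  have hσ : ∀ v w, r (σ v) (σ w) ↔ r v w := fun v w => by
    have h := hrel v w
    rw [hc1, hc1, one_pow, one_mul, mul_one] at h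
    rw [← relMatrix_ne_zero_iff (k := k) (r := r), ← h, relMatrix_ne_zero_iff]
  refine ⟨⟨σ, hσ _ _⟩, Subtype.ext (LinearEquiv.toLinearMap_injective
    ((Pi.basisFun k V).ext fun v => ?_))⟩
  show (relIsoToAut k r _ : (V → k) ≃ₗ[k] _) _ = e _
  rw [relIsoToAut_apply_basisFun, hc, hc1, one_smul]
  rfl

noncomputable def autEquivRelIso (hrefl : ∀ v, r v v)
    (hreg : (ofMatrix (relMatrix k r)).IsRegular) :
    (ofMatrix (relMatrix k r)).Aut ≃* (r ≃r r) :=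
  (MulEquiv.ofBijective (relIsoToAut k r)
    ⟨relIsoToAut_injective, relIsoToAut_surjective hrefl hreg⟩).symm

variable (k) in
theorem isRegular_ofMatrix_relMatrix (hrefl : ∀ v, r v v) (rank : V → ℕ)
    (hrank : ∀ v w, r v w → w ≠ v → rank w < rank v) :
    (ofMatrix (relMatrix k r)).IsRegular :=
  isRegular_ofMatrix <| Matrix.span_range_row_eq_top_of_triangular rank
    (fun v => by simp [relMatrix_of_rel (hrefl v)])
    fun v w hwv hvw => hrank v w (relMatrix_ne_zero_iff.mp hvw) hwv

end EvolutionAlgebra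

namespace Frucht

variable (H : Type*) [Fintype H]

abbrev Vertex := H ⊕ (H × H) × Fin (Fintype.card H + 1)

variable {H}

noncomputable def tag (s : H) : Fin (Fintype.card H + 1) := (Fintype.equivFin H s).succ

theorem tag_ne_zero (s : H) : tag s ≠ 0 := Fin.succ_ne_zero _

theorem tag_injective : Function.Injective (tag (H := H)) :=
  (Fin.succ_injective _).comp (Fintype.equivFin H).injective

def rank : Vertex H → ℕ
  | .inl _ => Fintype.card H + 1
  | .inr (_, m) => m.rev

variable (H) [Group H]

-- Frucht's construction, for digraphs: each `inl g` is an element of `H`; each ordered pair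
-- `(g, h)` has a directed path `inr ((g, h), 0) → ⋯ → inr ((g, h), card H)`, entered from `g` at
-- its start and from `h` at position `tag (g⁻¹ * h) ≠ 0`. Every vertex carries a loop.
def Adj : Vertex H → Vertex H → Prop
  | .inl x, .inl y => x = y
  | .inl x, .inr ((g, h), m) => x = g ∧ m = 0 ∨ x = h ∧ m = tag (g⁻¹ * h)
  | .inr _, .inl _ => False
  | .inr (q, m), .inr (q', m') => q = q' ∧ (m' = m ∨ (m' : ℕ) = m + 1)

variable {H}

theorem adj_refl (v : Vertex H) : Adj H v v := by
  rcases v with x | ⟨q, m⟩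
  exacts [rfl, ⟨rfl, Or.inl rfl⟩]

theorem rank_lt_of_adj {v w : Vertex H} (hvw : Adj H v w) (hwv : w ≠ v) : rank w < rank v := by
  rcases v with x | ⟨q, m⟩ <;> rcases w with y | ⟨q', m'⟩
  · exact absurd (congrArg Sum.inl hvw).symm hwv
  · exact m'.rev.isLt
  · exact hvw.elim
  · obtain ⟨rfl, hm | hm⟩ := hvw
    · exact absurd (by rw [hm]) hwv
    · simp only [rank, Fin.val_rev]
      omega

def leftMul (g : H) : Vertex H ≃ Vertex H :=
  (Equiv.mulLeft g).sumCongr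
    (((Equiv.mulLeft g).prodCongr (Equiv.mulLeft g)).prodCongr (Equiv.refl _))

@[simp] theorem leftMul_inl (g x : H) : leftMul g (.inl x) = .inl (g * x) := rfl

@[simp] theorem leftMul_inr (g a b : H) (m : Fin (Fintype.card H + 1)) :
    leftMul g (.inr ((a, b), m)) = .inr ((g * a, g * b), m) := rfl

theorem adj_leftMul (g : H) {v w : Vertex H} : Adj H (leftMul g v) (leftMul g w) ↔ Adj H v w := by
  rcases v with x | ⟨⟨a, b⟩, m⟩ <;> rcases w with y | ⟨⟨a', b'⟩, m'⟩ <;>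
    simp [Adj, mul_assoc]

variable (H)

def leftMulHom : H →* (Adj H ≃r Adj H) where
  toFun g := ⟨leftMul g, adj_leftMul g⟩
  map_one' := RelIso.ext fun v => by
    rcases v with x | ⟨⟨a, b⟩, m⟩ <;> simp [RelIso.one_apply]
  map_mul' g g' := RelIso.ext fun v => by
    rcases v with x | ⟨⟨a, b⟩, m⟩ <;> simp [RelIso.mul_apply, mul_assoc]

variable {H}

theorem adj_inl_right_iff {v : Vertex H} {x : H} : Adj H v (.inl x) ↔ v = .inl x := by
  rcases v with y | c <;> simp [Adj]

theorem exists_adj_inr_ne (c : (H × H) × Fin (Fintype.card H + 1)) :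
    ∃ w, Adj H w (.inr c) ∧ w ≠ .inr c := by
  obtain ⟨⟨g, h⟩, m⟩ := c
  cases m using Fin.cases with
  | zero => exact ⟨.inl g, Or.inl ⟨rfl, rfl⟩, Sum.inl_ne_inr⟩
  | succ m =>
    exact ⟨.inr ((g, h), m.castSucc), ⟨rfl, Or.inr (by simp)⟩, by simp [Fin.ext_iff]⟩

theorem exists_apply_inl (σ : Adj H ≃r Adj H) (x : H) : ∃ y, σ (.inl x) = .inl y := by
  rcases hσ : σ (.inl x) with y | c
  · exact ⟨y, rfl⟩
  · obtain ⟨w, hw, hne⟩ := exists_adj_inr_ne c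
    rw [← hσ] at hw hne
    have h : Adj H (σ.symm w) (.inl x) := σ.map_rel_iff.mp (by rwa [σ.apply_symm_apply])
    exact (hne (σ.symm_apply_eq.mp (adj_inl_right_iff.mp h))).elim

theorem exists_apply_inr (σ : Adj H ≃r Adj H) (c : (H × H) × Fin (Fintype.card H + 1)) :
    ∃ c', σ (.inr c) = .inr c' := by
  rcases hσ : σ (.inr c) with y | c'
  · obtain ⟨x, hx⟩ := exists_apply_inl σ.symm y
    rw [← hσ, σ.symm_apply_apply] at hx
    exact (Sum.inr_ne_inl hx).elim
  · exact ⟨c', rfl⟩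

theorem exists_apply_inr_of_apply_inr_zero (σ : Adj H ≃r Adj H) {q q' : H × H}
    {m' : Fin (Fintype.card H + 1)} (h0 : σ (.inr (q, 0)) = .inr (q', m'))
    (m : Fin (Fintype.card H + 1)) :
    ∃ c, σ (.inr (q, m)) = .inr c ∧ c.1 = q' ∧ (c.2 : ℕ) = m' + m := by
  induction m using Fin.induction with
  | zero => exact ⟨_, h0, rfl, rfl⟩
  | succ m ih =>
    obtain ⟨⟨q₁, m₁⟩, hc, rfl, hm₁⟩ := ih
    obtain ⟨⟨q₂, m₂⟩, hc'⟩ := exists_apply_inr σ (q, m.succ)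
    have hadj : Adj H (.inr (q₁, m₁)) (.inr (q₂, m₂)) := by
      rw [← hc, ← hc', σ.map_rel_iff]
      exact ⟨rfl, Or.inr (by simp)⟩
    obtain ⟨rfl, hm | hm⟩ := hadj
    · have := σ.injective (hc'.trans (hm ▸ hc.symm))
      simp [Fin.ext_iff] at this
    · simp only [Fin.val_castSucc] at hm₁
      exact ⟨_, hc', rfl, by simp only [Fin.val_succ]; omega⟩

theorem exists_apply_inr_eq (σ : Adj H ≃r Adj H) (q : H × H) :
    ∃ q', ∀ m, σ (.inr (q, m)) = .inr (q', m) := by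
  obtain ⟨⟨q', m'⟩, h0⟩ := exists_apply_inr σ (q, 0)
  -- Paths are mapped to paths without lowering positions, by `σ` and by `σ⁻¹` alike.
  have hm' : m' = 0 := by
    obtain ⟨⟨q'', m''⟩, h0'⟩ := exists_apply_inr σ.symm (q', 0)
    obtain ⟨c, hc, -, hc2⟩ := exists_apply_inr_of_apply_inr_zero σ.symm h0' m'
    rw [← h0, σ.symm_apply_apply, Sum.inr.injEq] at hc
    subst hc
    exact Fin.ext (by simp only [Fin.val_zero] at hc2 ⊢; omega)
  subst hm'
  refine ⟨q', fun m => ?_⟩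
  obtain ⟨c, hc, hc1, hc2⟩ := exists_apply_inr_of_apply_inr_zero σ h0 m
  rw [hc, (Prod.ext hc1 (Fin.ext (by simpa using hc2)) : c = (q', m))]

theorem leftMulHom_surjective : Function.Surjective (leftMulHom H) := by
  intro σ
  choose τ hτ using exists_apply_inl σ
  choose Q hQ using exists_apply_inr_eq σ
  have hQ_fst : ∀ g h, (Q (g, h)).1 = τ g := fun g h => by
    have hadj : Adj H (.inl (τ g)) (.inr (Q (g, h), 0)) := by
      rw [← hτ, ← hQ, σ.map_rel_iff]
      exact Or.inl ⟨rfl, rfl⟩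
    rcases hq : Q (g, h) with ⟨a, b⟩
    rw [hq] at hadj
    rcases hadj with ⟨h1, -⟩ | ⟨-, h2⟩
    exacts [h1.symm, absurd h2.symm (tag_ne_zero _)]
  have hQ_snd : ∀ g h, (Q (g, h)).2 = τ h ∧ g⁻¹ * h = (τ g)⁻¹ * τ h := fun g h => by
    have hadj : Adj H (.inl (τ h)) (.inr (Q (g, h), tag (g⁻¹ * h))) := by
      rw [← hτ, ← hQ, σ.map_rel_iff]
      exact Or.inr ⟨rfl, rfl⟩
    have hfst := hQ_fst g h
    rcases hq : Q (g, h) with ⟨a, b⟩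
    rw [hq] at hadj hfst
    subst hfst
    rcases hadj with ⟨-, h1⟩ | ⟨rfl, h2⟩
    exacts [absurd h1 (tag_ne_zero _), ⟨rfl, tag_injective h2⟩]
  have hτ_mul : ∀ h, τ h = τ 1 * h := fun h => by
    have := (hQ_snd 1 h).2
    rw [inv_one, one_mul] at this
    exact inv_mul_eq_iff_eq_mul.mp this.symm
  refine ⟨τ 1, RelIso.ext fun v => ?_⟩
  rcases v with x | ⟨⟨g, h⟩, m⟩
  · rw [hτ, hτ_mul x]
    rfl
  · rw [hQ, (Prod.ext ((hQ_fst g h).trans (hτ_mul g)) ((hQ_snd g h).1.trans (hτ_mul h)) :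
      Q (g, h) = (τ 1 * g, τ 1 * h))]
    rfl

theorem leftMulHom_injective : Function.Injective (leftMulHom H) := fun g g' h => by
  simpa [leftMulHom] using RelIso.ext_iff.mp h (.inl 1)

variable (H) in
noncomputable def mulEquivRelIso : H ≃* (Adj H ≃r Adj H) :=
  MulEquiv.ofBijective (leftMulHom H) ⟨leftMulHom_injective, leftMulHom_surjective⟩

end Frucht

/-- A group `G` is finite if and only if it is (isomorphic to) the automorphism group of
some finite-dimensional regular evolution algebra over `k`. -/
theorem finite_iff_aut_of_regular_evolution_algebra (k : Type u) [Field k]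
    (G : Type v) [Group G] :
    Finite G ↔ ∃ A : EvolutionAlgebra k, A.IsRegular ∧ Nonempty (A.Aut ≃* G) := by
  refine ⟨fun _ => ?_, fun ⟨A, hA, ⟨e⟩⟩ => ?_⟩
  · obtain ⟨H, _, _, ⟨eH⟩⟩ := Finite.exists_type_univ_nonempty_mulEquiv.{v, u} G
    have hreg := EvolutionAlgebra.isRegular_ofMatrix_relMatrix k (Frucht.adj_refl (H := H))
      Frucht.rank fun _ _ => Frucht.rank_lt_of_adj
    exact ⟨_, hreg, ⟨(EvolutionAlgebra.autEquivRelIso Frucht.adj_refl hreg).trans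
      ((Frucht.mulEquivRelIso H).symm.trans eH.symm)⟩⟩
  · have := A.finite_aut hA
    exact Finite.of_equiv _ e.toEquiv
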